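/- arXiv:2005.04829 — 3 statements merged into one kernel-verified Lean document; each statement's English description precedes it below -/
import Mathlib

section
/- Let p < q be integers and set k := (if 0 ≤ p then 1 else 0) + (if 0 ≤ q then 1 else 0) - 1 ∈ ℤ. Then the function s ↦ s^k · Γ_ℂ(s-p) · Γ_ℂ(s-q) · sin(π(s-q))/2 tends to (-1)^q · (2π)^{p+q+1} · Γ*(-p) · Γ*(-q) as s tends to 0 within the punctured neighborhood of 0 in ℂ (s^k denoting the integer power). -/
open Filter Topology

/-- The complexified archimedean Euler factor `Γ_ℂ(s) = 2 (2π)^{-s} Γ(s)`. -/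
noncomputable def GammaC (s : ℂ) : ℂ := 2 * (2 * (Real.pi : ℂ)) ^ (-s) * Complex.Gamma s

/-- The leading Taylor coefficient of the Gamma function at the integer `j`. -/
def GammaStar (j : ℤ) : ℚ :=
  if 1 ≤ j then ((j - 1).toNat.factorial : ℚ)
  else (-1 : ℚ) ^ j / ((-j).toNat.factorial : ℚ)

/-!
The factor `s ^ [0 ≤ n]` exactly cancels the pole of `Γ(s - n)` at `s = 0`: by the recursion
`Γ(s + 1) = s Γ(s)`, `Γ` has residue `(-1)^n / n!` at `-n`, and `Γ(m + 1) = m!`. In both cases the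
limit is `Γ*(-n)`, so `s ^ [0 ≤ n] Γ_ℂ(s - n) → 2 (2π)^n Γ*(-n)`. The sine factor vanishes to
first order, `sin(π(s - q)) / s → (-1)^q π`, which accounts for the `- 1` in the exponent `k`.
-/

open Complex Nat

theorem GammaStar_neg_natCast (m : ℕ) : GammaStar (-m) = (-1) ^ m / m ! := by
  rw [GammaStar, if_neg (by omega), neg_neg, Int.toNat_natCast, zpow_neg, zpow_natCast,
    ← inv_pow, inv_neg_one]

theorem GammaStar_natCast_add_one (m : ℕ) : GammaStar (m + 1) = m ! := by
  rw [GammaStar, if_pos (by omega)]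
  simp

theorem tendsto_self_mul_Gamma_sub_natCast (n : ℕ) :
    Tendsto (fun s : ℂ => s * Gamma (s - n)) (𝓝[≠] 0) (𝓝 ((-1) ^ n / n !)) := by
  induction n with
  | zero => simpa using tendsto_self_mul_Gamma_nhds_zero
  | succ n ih =>
    have hshift : Tendsto (fun s : ℂ => s - (n + 1)) (𝓝[≠] 0) (𝓝 (-(n + 1))) :=
      (Continuous.tendsto' (by fun_prop) 0 _ (by ring)).mono_left nhdsWithin_le_nhds
    have hne : (-(n + 1) : ℂ) ≠ 0 := neg_ne_zero.2 n.cast_add_one_ne_zero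
    have hrec : ∀ᶠ s : ℂ in 𝓝[≠] 0, s * Gamma (s - n) / (s - (n + 1)) =
        s * Gamma (s - (n + 1 : ℕ)) := by
      filter_upwards [hshift.eventually_ne hne] with s hs
      rw [div_eq_iff hs, Nat.cast_succ, mul_assoc, mul_comm (Gamma _), ← Gamma_add_one _ hs]
      ring_nf
    convert (ih.div hshift hne).congr' hrec using 2
    push_cast [Nat.factorial_succ]
    field_simp
    ring

theorem tendsto_Gamma_add_natCast_add_one (n : ℕ) :
    Tendsto (fun s : ℂ => Gamma (s + (n + 1))) (𝓝[≠] 0) (𝓝 n !) := by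
  have hcont : ContinuousAt Gamma (n + 1) := by
    refine (differentiableAt_Gamma _ fun m h => ?_).continuousAt
    have hre := congrArg re h
    simp only [add_re, natCast_re, one_re, neg_re] at hre
    linarith
  rw [← Gamma_nat_eq_factorial]
  refine (hcont.tendsto.comp ?_).mono_left nhdsWithin_le_nhds
  exact Continuous.tendsto' (by fun_prop) 0 _ (zero_add _)

theorem tendsto_zpow_mul_Gamma_sub_intCast (n : ℤ) :
    Tendsto (fun s : ℂ => s ^ (if 0 ≤ n then (1 : ℤ) else 0) * Gamma (s - n)) (𝓝[≠] 0)
      (𝓝 ((GammaStar (-n) : ℚ) : ℂ)) := by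
  rcases n with m | m
  · simpa [GammaStar_neg_natCast] using tendsto_self_mul_Gamma_sub_natCast m
  · have hneg : -Int.negSucc m = m + 1 := by omega
    have hcast : ((Int.negSucc m : ℤ) : ℂ) = -(m + 1) := by push_cast; ring
    simp only [if_neg (Int.negSucc_lt_zero m).not_ge, zpow_zero, one_mul, hcast, sub_neg_eq_add,
      hneg, GammaStar_natCast_add_one, Rat.cast_natCast]
    exact tendsto_Gamma_add_natCast_add_one m

theorem tendsto_zpow_mul_GammaC_sub_intCast (n : ℤ) :
    Tendsto (fun s : ℂ => s ^ (if 0 ≤ n then (1 : ℤ) else 0) * GammaC (s - n)) (𝓝[≠] 0)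
      (𝓝 (2 * (2 * (Real.pi : ℂ)) ^ n * ((GammaStar (-n) : ℚ) : ℂ))) := by
  have hpow : Tendsto (fun s : ℂ => (2 * (Real.pi : ℂ)) ^ (-(s - n))) (𝓝[≠] 0)
      (𝓝 ((2 * (Real.pi : ℂ)) ^ n)) := by
    rw [← cpow_intCast]
    refine (Tendsto.const_cpow ?_ (Or.inl (by simp [Real.pi_ne_zero]))).mono_left
      nhdsWithin_le_nhds
    exact Continuous.tendsto' (by fun_prop) 0 _ (by ring)
  refine ((hpow.const_mul 2).mul (tendsto_zpow_mul_Gamma_sub_intCast n)).congr fun s => ?_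
  simp only [GammaC]
  ring

theorem tendsto_sin_pi_mul_sub_intCast_div_self (q : ℤ) :
    Tendsto (fun s : ℂ => sin (Real.pi * (s - q)) / s) (𝓝[≠] 0)
      (𝓝 ((-1) ^ q * Real.pi)) := by
  have hderiv : HasDerivAt (fun s : ℂ => sin (Real.pi * s)) Real.pi 0 := by
    simpa using ((hasDerivAt_id (0 : ℂ)).const_mul (Real.pi : ℂ)).csin
  refine (hderiv.tendsto_slope_zero.const_mul ((-1) ^ q)).congr fun s => ?_
  rw [mul_sub, mul_comm (Real.pi : ℂ) q, sin_antiperiodic.sub_int_mul_eq, Int.cast_negOnePow]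
  simp only [zero_add, mul_zero, sin_zero, sub_zero, smul_eq_mul, div_eq_inv_mul]
  ring

theorem tendsto_Lfactor_pq_general (p q : ℤ) :
    Tendsto
      (fun s : ℂ =>
        s ^ ((if (0 : ℤ) ≤ p then (1 : ℤ) else 0) + (if (0 : ℤ) ≤ q then (1 : ℤ) else 0) - 1) *
          GammaC (s - (p : ℂ)) * GammaC (s - (q : ℂ)) *
          Complex.sin ((Real.pi : ℂ) * (s - (q : ℂ))) / 2)
      (𝓝[≠] (0 : ℂ))
      (𝓝 ((-1 : ℂ) ^ q * (2 * (Real.pi : ℂ)) ^ (p + q + 1) *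
        ((GammaStar (-p) : ℚ) : ℂ) * ((GammaStar (-q) : ℚ) : ℂ))) := by
  have hlim := (((tendsto_zpow_mul_GammaC_sub_intCast p).mul
    (tendsto_zpow_mul_GammaC_sub_intCast q)).mul
    (tendsto_sin_pi_mul_sub_intCast_div_self q)).div_const 2
  have h2π : (2 * (Real.pi : ℂ)) ≠ 0 := by simp [Real.pi_ne_zero]
  convert hlim.congr' ?_ using 2
  · rw [zpow_add₀ h2π, zpow_add₀ h2π, zpow_one]
    ring
  · filter_upwards [self_mem_nhdsWithin] with s (hs : s ≠ 0)
    rw [zpow_sub_one₀ hs, zpow_add₀ hs]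
    ring

/-- Leading coefficient at `s = 0` of
`Γ_ℂ(s-p) Γ_ℂ(s-q) sin(π(s-q))/2` for integers `p < q`:
with `k = (if 0 ≤ p then 1 else 0) + (if 0 ≤ q then 1 else 0) - 1`,
`s^k Γ_ℂ(s-p) Γ_ℂ(s-q) sin(π(s-q))/2 → (-1)^q (2π)^{p+q+1} Γ*(-p) Γ*(-q)`. -/
theorem tendsto_Lfactor_pq (p q : ℤ) (hpq : p < q) :
    Tendsto
      (fun s : ℂ =>
        s ^ ((if (0 : ℤ) ≤ p then (1 : ℤ) else 0) + (if (0 : ℤ) ≤ q then (1 : ℤ) else 0) - 1) *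
          GammaC (s - (p : ℂ)) * GammaC (s - (q : ℂ)) *
          Complex.sin ((Real.pi : ℂ) * (s - (q : ℂ))) / 2)
      (𝓝[≠] (0 : ℂ))
      (𝓝 ((-1 : ℂ) ^ q * (2 * (Real.pi : ℂ)) ^ (p + q + 1) *
        ((GammaStar (-p) : ℚ) : ℂ) * ((GammaStar (-q) : ℚ) : ℂ))) :=
  tendsto_Lfactor_pq_general p q
end

section
/- Let p = 2m be an even integer and set k := (if 0 ≤ p then 1 else 0) ∈ ℤ. Then the function s ↦ s^k · Γ_ℂ(s-p) · cos(π(s-p)/2) tends to (-1)^m · 2 · (2π)^p · Γ*(-p) as s tends to 0 within the punctured neighborhood of 0 in ℂ (s^k denoting the integer power). -/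
open Filter Topology

lemma aux_gamma (n : ℕ) :
    Tendsto (fun s : ℂ => s * Complex.Gamma (s - n)) (𝓝[≠] (0 : ℂ))
      (𝓝 ((-1 : ℂ) ^ n / n.factorial)) := by
  induction n with
  | zero => simpa using Complex.tendsto_self_mul_Gamma_nhds_zero
  | succ n ih =>
    have hne : ((0 : ℂ) - (n + 1 : ℕ)) ≠ 0 := by
      simp only [zero_sub, neg_ne_zero]
      exact_mod_cast (Nat.cast_ne_zero (R := ℂ)).mpr (Nat.succ_ne_zero n)
    have h2 : Tendsto (fun s : ℂ => s - (n + 1 : ℕ)) (𝓝[≠] (0 : ℂ))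
        (𝓝 ((0 : ℂ) - (n + 1 : ℕ))) :=
      ((continuous_id.sub continuous_const).tendsto _).mono_left nhdsWithin_le_nhds
    have key := ih.div h2 hne
    have heq : (fun s : ℂ => s * Complex.Gamma (s - n) / (s - (n + 1 : ℕ))) =ᶠ[𝓝[≠] (0 : ℂ)]
        (fun s : ℂ => s * Complex.Gamma (s - (n + 1 : ℕ))) := by
      have hev : ∀ᶠ s : ℂ in 𝓝[≠] (0 : ℂ), s - (n + 1 : ℕ) ≠ 0 := by
        have : ContinuousAt (fun s : ℂ => s - (n + 1 : ℕ)) 0 :=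
          (continuous_id.sub continuous_const).continuousAt
        exact (this.eventually_ne hne).filter_mono nhdsWithin_le_nhds
      filter_upwards [hev] with s hs
      have : Complex.Gamma (s - n) = (s - (n + 1 : ℕ)) * Complex.Gamma (s - (n + 1 : ℕ)) := by
        rw [← Complex.Gamma_add_one _ hs]
        congr 1
        push_cast
        ring
      rw [this, mul_comm ((s : ℂ) - ((n + 1 : ℕ) : ℂ)), ← mul_assoc]
      exact mul_div_cancel_right₀ _ hs
    have hval : ((-1 : ℂ) ^ n / n.factorial) / ((0 : ℂ) - (n + 1 : ℕ)) =
        (-1 : ℂ) ^ (n + 1) / (n + 1).factorial := by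
      have h1 : ((0 : ℂ) - ((n + 1 : ℕ) : ℂ)) = -((n + 1 : ℕ) : ℂ) := by ring
      rw [h1, div_neg, Nat.factorial_succ]
      push_cast
      field_simp
      ring
    exact hval ▸ key.congr' heq

lemma cos_pi_int (j : ℤ) : Complex.cos ((j : ℂ) * (Real.pi : ℂ)) = (-1 : ℂ) ^ j := by
  have h := Real.cos_int_mul_pi_sub 0 j
  rw [sub_zero, Real.cos_zero, mul_one] at h
  calc Complex.cos ((j : ℂ) * (Real.pi : ℂ)) = ((Real.cos (j * Real.pi) : ℝ) : ℂ) := by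
        rw [Complex.ofReal_cos]; norm_cast
    _ = (-1 : ℂ) ^ j := by rw [h, Complex.ofReal_zpow]; norm_num

lemma cpow_val (p : ℤ) : (2 * (Real.pi : ℂ)) ^ (-((0 : ℂ) - (p : ℂ))) = (2 * (Real.pi : ℂ)) ^ p := by
  rw [show -((0 : ℂ) - (p : ℂ)) = ((p : ℤ) : ℂ) by ring, Complex.cpow_intCast]

lemma cos_val (p m : ℤ) (hp : p = 2 * m) :
    Complex.cos ((Real.pi : ℂ) * ((0 : ℂ) - (p : ℂ)) / 2) = (-1 : ℂ) ^ m := by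
  have h1 : (Real.pi : ℂ) * ((0 : ℂ) - (p : ℂ)) / 2 = ((-m : ℤ) : ℂ) * (Real.pi : ℂ) := by
    push_cast [hp]
    ring
  rw [h1, cos_pi_int, zpow_neg, ← inv_zpow, inv_neg, inv_one]

/-- Leading coefficient at `s = 0` of `Γ_ℂ(s-p) cos(π(s-p)/2)` for `p = 2m` even:
with `k = if 0 ≤ p then 1 else 0`,
`s^k Γ_ℂ(s-p) cos(π(s-p)/2) → (-1)^m · 2 · (2π)^p · Γ*(-p)`. -/
theorem tendsto_Lfactor_even (p m : ℤ) (hp : p = 2 * m) :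
    Tendsto
      (fun s : ℂ =>
        s ^ (if (0 : ℤ) ≤ p then (1 : ℤ) else 0) * GammaC (s - (p : ℂ)) *
          Complex.cos ((Real.pi : ℂ) * (s - (p : ℂ)) / 2))
      (𝓝[≠] (0 : ℂ))
      (𝓝 ((-1 : ℂ) ^ m * 2 * (2 * (Real.pi : ℂ)) ^ p * ((GammaStar (-p) : ℚ) : ℂ))) := by
  have h2pi : (2 * (Real.pi : ℂ)) ≠ 0 := by
    simp [Real.pi_ne_zero]
  have hcpow : ContinuousAt (fun s : ℂ => (2 * (Real.pi : ℂ)) ^ (-(s - (p : ℂ)))) 0 :=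
    (continuousAt_const_cpow h2pi).comp ((continuous_id.sub continuous_const).neg).continuousAt
  have hcos : Continuous fun s : ℂ => Complex.cos ((Real.pi : ℂ) * (s - (p : ℂ)) / 2) := by
    fun_prop
  rcases le_or_gt 0 p with hp0 | hp0
  · -- case p ≥ 0
    set n : ℕ := p.toNat with hn
    have hpn : (p : ℂ) = (n : ℂ) := by
      rw [hn]
      exact_mod_cast congrArg (Int.cast : ℤ → ℂ) (Int.toNat_of_nonneg hp0).symm
    have hm0 : 0 ≤ m := by omega
    simp only [if_pos hp0, zpow_one]
    have hcont : Tendsto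
        (fun s : ℂ => 2 * (2 * (Real.pi : ℂ)) ^ (-(s - (p : ℂ))) *
          Complex.cos ((Real.pi : ℂ) * (s - (p : ℂ)) / 2)) (𝓝[≠] (0 : ℂ))
        (𝓝 (2 * (2 * (Real.pi : ℂ)) ^ (-((0 : ℂ) - (p : ℂ))) *
          Complex.cos ((Real.pi : ℂ) * ((0 : ℂ) - (p : ℂ)) / 2))) :=
      (((continuousAt_const.mul hcpow).mul hcos.continuousAt).tendsto).mono_left
        nhdsWithin_le_nhds
    have H := hcont.mul (aux_gamma n)
    have hfun : ∀ s : ℂ,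
        (2 * (2 * (Real.pi : ℂ)) ^ (-(s - (p : ℂ))) *
            Complex.cos ((Real.pi : ℂ) * (s - (p : ℂ)) / 2)) *
          (s * Complex.Gamma (s - (n : ℂ))) =
        s * GammaC (s - (p : ℂ)) * Complex.cos ((Real.pi : ℂ) * (s - (p : ℂ)) / 2) := by
      intro s
      rw [GammaC, ← hpn]
      ring
    have hn1 : (-1 : ℂ) ^ n = 1 := by
      refine Even.neg_one_pow ⟨m.toNat, ?_⟩
      omega
    have hgs : ((GammaStar (-p) : ℚ) : ℂ) = ((n.factorial : ℂ))⁻¹ := by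
      rw [GammaStar, if_neg (by omega)]
      have hq1 : (-1 : ℚ) ^ (-p) = 1 := by
        rw [hp, show -(2 * m) = 2 * (-m) by ring, zpow_mul]
        norm_num
      rw [neg_neg, hq1, ← hn]
      push_cast
      ring
    have hlim : (2 * (2 * (Real.pi : ℂ)) ^ (-((0 : ℂ) - (p : ℂ))) *
          Complex.cos ((Real.pi : ℂ) * ((0 : ℂ) - (p : ℂ)) / 2)) *
        ((-1 : ℂ) ^ n / (n.factorial : ℂ)) =
        (-1 : ℂ) ^ m * 2 * (2 * (Real.pi : ℂ)) ^ p * ((GammaStar (-p) : ℚ) : ℂ) := by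
      rw [cpow_val, cos_val p m hp, hn1, hgs]
      ring
    rw [← hlim]
    exact H.congr hfun
  · -- case p < 0
    set q : ℕ := (-p).toNat with hq
    have hq1 : 1 ≤ q := by omega
    have hpq : (0 : ℂ) - (p : ℂ) = (q : ℂ) := by
      have h : -p = (q : ℤ) := by omega
      rw [zero_sub]
      exact_mod_cast h
    simp only [if_neg (not_le.mpr hp0), zpow_zero]
    have hGamma : ContinuousAt (fun s : ℂ => Complex.Gamma (s - (p : ℂ))) 0 := by
      refine ((Complex.differentiableAt_Gamma _ ?_).continuousAt).comp
        ((continuous_id.sub continuous_const).continuousAt)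
      intro k hk
      rw [hpq] at hk
      have : (q : ℤ) = -(k : ℤ) := by exact_mod_cast hk
      omega
    have hcont : Tendsto
        (fun s : ℂ => GammaC (s - (p : ℂ)) * Complex.cos ((Real.pi : ℂ) * (s - (p : ℂ)) / 2))
        (𝓝[≠] (0 : ℂ))
        (𝓝 (GammaC ((0 : ℂ) - (p : ℂ)) *
          Complex.cos ((Real.pi : ℂ) * ((0 : ℂ) - (p : ℂ)) / 2))) := by
      refine Tendsto.mono_left ?_ nhdsWithin_le_nhds
      exact (((continuousAt_const.mul hcpow).mul hGamma).mul hcos.continuousAt).tendsto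
    have hGval : Complex.Gamma ((0 : ℂ) - (p : ℂ)) = ((q - 1).factorial : ℂ) := by
      rw [hpq, show (q : ℂ) = ((q - 1 : ℕ) : ℂ) + 1 by push_cast [Nat.cast_sub hq1]; ring,
        Complex.Gamma_nat_eq_factorial]
    have hgs : ((GammaStar (-p) : ℚ) : ℂ) = ((q - 1).factorial : ℂ) := by
      rw [GammaStar, if_pos (by omega : (1:ℤ) ≤ -p)]
      have h3 : (-p - 1).toNat = q - 1 := by omega
      rw [h3]
      push_cast
      ring
    have hlim : GammaC ((0 : ℂ) - (p : ℂ)) *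
        Complex.cos ((Real.pi : ℂ) * ((0 : ℂ) - (p : ℂ)) / 2) =
        (-1 : ℂ) ^ m * 2 * (2 * (Real.pi : ℂ)) ^ p * ((GammaStar (-p) : ℚ) : ℂ) := by
      rw [GammaC, cpow_val, cos_val p m hp, hGval, hgs]
      ring
    rw [← hlim]
    exact hcont.congr (fun s => by ring)
end

section
/- Let p = 2m+1 be an odd integer and set k := (if 0 ≤ p then 1 else 0) - 1 ∈ ℤ. Then the function s ↦ s^k · Γ_ℂ(s-p) · cos(π(s-p)/2) tends to (-1)^m · π · (2π)^p · Γ*(-p) as s tends to 0 within the punctured neighborhood of 0 in ℂ (s^k denoting the integer power). -/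
open Filter Topology

/-!
Write `p = 2m+1`. Since `cos(π(s-p)/2) = (-1)^m sin(πs/2)`, the function equals
`2 (-1)^m (2π)^(p-s) · s^e Γ(s-p) · sin(πs/2)/s` with `e = 1` if `-p ≤ 0` and `e = 0` otherwise.
The last factor tends to `π/2`, and `s^e Γ(s+j) → Γ*(j)`: for `j ≥ 1` by continuity of `Γ`, and
for `j = -n ≤ 0` because the residue `(-1)^n/n!` of `Γ` at `-n` comes from the residue `1` at `0`
through `Γ(s+1) = s Γ(s)`.
-/

open Complex
open scoped Real

lemma tendsto_sin_mul_div_self (c : ℂ) :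
    Tendsto (fun s : ℂ => sin (c * s) / s) (𝓝[≠] 0) (𝓝 c) := by
  have h := (((hasDerivAt_id (0 : ℂ)).const_mul c).csin).tendsto_slope_zero
  simpa [div_eq_inv_mul] using h

lemma tendsto_self_mul_Gamma_sub_nat (n : ℕ) :
    Tendsto (fun s : ℂ => s * Gamma (s - n)) (𝓝[≠] 0) (𝓝 ((-1) ^ n / n.factorial)) := by
  induction n with
  | zero => simpa using tendsto_self_mul_Gamma_nhds_zero
  | succ n ih =>
    have hpole : (0 : ℂ) ≠ n + 1 := by exact_mod_cast (n.succ_ne_zero).symm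
    have hden : Tendsto (fun s : ℂ => s - (n + 1)) (𝓝[≠] 0) (𝓝 (0 - (n + 1))) :=
      ((continuous_sub_right _).tendsto 0).mono_left nhdsWithin_le_nhds
    convert (ih.div hden (sub_ne_zero.2 hpole)).congr' ?_ using 2
    · push_cast [Nat.factorial_succ, pow_succ]
      field_simp
      ring
    · filter_upwards [nhdsWithin_le_nhds (eventually_ne_nhds hpole)] with s hs
      have hrec := Gamma_add_one (s - (n + 1)) (sub_ne_zero.2 hs)
      rw [show s - (n + 1) + 1 = s - n by ring] at hrec
      simp only [Pi.div_apply, hrec, Nat.cast_succ]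
      field_simp [sub_ne_zero.2 hs]

lemma tendsto_zpow_mul_Gamma_add_int (j : ℤ) :
    Tendsto (fun s : ℂ => s ^ (if j ≤ 0 then (1 : ℤ) else 0) * Gamma (s + j)) (𝓝[≠] 0)
      (𝓝 (GammaStar j)) := by
  by_cases hj : j ≤ 0
  · obtain ⟨n, rfl⟩ := Int.exists_eq_neg_ofNat hj
    have hval : ((GammaStar (-n) : ℚ) : ℂ) = (-1) ^ n / n.factorial := by
      rcases n.eq_zero_or_pos with rfl | hn
      · simp [GammaStar]
      · rw [GammaStar, if_neg (by omega)]
        push_cast [zpow_neg, zpow_natCast, ← inv_pow, inv_neg, inv_one]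
        simp
    simpa [hj, hval, ← sub_eq_add_neg] using tendsto_self_mul_Gamma_sub_nat n
  · obtain ⟨n, rfl⟩ : ∃ n : ℕ, j = n + 1 := ⟨(j - 1).toNat, by omega⟩
    have hval : ((GammaStar (n + 1) : ℚ) : ℂ) = Gamma (n + 1) := by
      rw [GammaStar, if_pos (by omega), Gamma_nat_eq_factorial]
      simp
    have hcont : ContinuousAt (fun s : ℂ => Gamma (s + (n + 1))) 0 :=
      (differentiableAt_Gamma_nat_add_one n).continuousAt.comp_of_eq
        (continuous_add_const _).continuousAt (zero_add _)
    simpa [hj, hval] using hcont.tendsto.mono_left nhdsWithin_le_nhds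

lemma cos_pi_mul_sub_odd_div_two (m : ℤ) (s : ℂ) :
    cos (π * (s - (2 * m + 1 : ℤ)) / 2) = (-1) ^ m * sin (π / 2 * s) := by
  have h := cos_antiperiodic.sub_int_mul_eq (x := (π : ℂ) / 2 * s - π / 2) m
  rw [Int.cast_negOnePow, cos_sub_pi_div_two] at h
  rw [← h]
  push_cast
  ring_nf

/-- Leading coefficient at `s = 0` of `Γ_ℂ(s-p) cos(π(s-p)/2)` for `p = 2m+1` odd:
with `k = (if 0 ≤ p then 1 else 0) - 1`,
`s^k Γ_ℂ(s-p) cos(π(s-p)/2) → (-1)^m · π · (2π)^p · Γ*(-p)`. -/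
theorem tendsto_Lfactor_odd (p m : ℤ) (hp : p = 2 * m + 1) :
    Tendsto
      (fun s : ℂ =>
        s ^ ((if (0 : ℤ) ≤ p then (1 : ℤ) else 0) - 1) * GammaC (s - (p : ℂ)) *
          Complex.cos ((Real.pi : ℂ) * (s - (p : ℂ)) / 2))
      (𝓝[≠] (0 : ℂ))
      (𝓝 ((-1 : ℂ) ^ m * (Real.pi : ℂ) * (2 * (Real.pi : ℂ)) ^ p *
        ((GammaStar (-p) : ℚ) : ℂ))) := by
  have h2pi : 2 * (π : ℂ) ≠ 0 := mul_ne_zero two_ne_zero (ofReal_ne_zero.2 Real.pi_ne_zero)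
  have hpow : Tendsto (fun s : ℂ => 2 * (-1) ^ m * (2 * (π : ℂ)) ^ (p - s)) (𝓝[≠] 0)
      (𝓝 (2 * (-1) ^ m * (2 * (π : ℂ)) ^ (p - 0 : ℂ))) :=
    (continuousAt_const.mul ((continuousAt_const.sub continuousAt_id).const_cpow
      (Or.inl h2pi))).tendsto.mono_left nhdsWithin_le_nhds
  have hlim := (hpow.mul (tendsto_zpow_mul_Gamma_add_int (-p))).mul
    (tendsto_sin_mul_div_self (π / 2))
  convert hlim.congr' ?_ using 2
  · rw [sub_zero, cpow_intCast]
    field_simp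
  · filter_upwards [self_mem_nhdsWithin] with s (hs : s ≠ 0)
    subst hp
    rw [cos_pi_mul_sub_odd_div_two]
    simp only [GammaC, neg_nonpos, zpow_sub₀ hs, zpow_one, neg_sub]
    push_cast
    field_simp
    ring_nf
end
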